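/- arXiv:2001.10640 — 2 statements merged into one kernel-verified Lean document; each statement's English description precedes it below -/
import Mathlib

section
/- Consider the Probabilistic Serial mechanism with n ≥ m, agent 1 having dichotomous utilities with interest set O̅, the truthful profile, and let T be the exhaustion time of O̅ with 1/2 ≤ T < 2/3. Suppose there is an item o_{k'} ∈ O̅, eaten by agent 1 during the interval (t_1, t_1 + t_2] and exhausted at time t_1 + t_2, such that at the moment t_1 + t_2 only agent 1 and one other agent (called agent 2) are eating o_{k'}; set t_3 = T − (t_1 + t_2). Then every item that is exhausted in the time interval (t_1 + t_2, T] in the truthful profile has, at the moment it is exhausted, at least two eating agents other than agents 1 and 2. -/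
open MeasureTheory

/-- An execution of the Probabilistic Serial eating process with `n` agents and `m` items
(each of supply 1).  Agent `i` reports the strict preference order encoded by the injective
rank function `rk i` (`rk i j < rk i j'` means agent `i` ranks item `j` above item `j'`).
`active i t` tells whether agent `i` participates (eats at rate 1) at time `t`; the normal
scenario is `active = fun _ _ => True`, pausing/removing agents is modelled by making them
inactive.  `eats i t = some j` means agent `i` is eating item `j` at time `t`, and `rem j t`
is the remaining supply of item `j` at time `t`: it equals `1` minus the total time agents
have spent eating `j` during `(0, t]`.  An active agent always eats its most preferred item
among those with positive remaining supply. -/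
structure PSExec (n m : ℕ) (rk : Fin n → Fin m → ℕ) (active : Fin n → ℝ → Prop) where
  eats : Fin n → ℝ → Option (Fin m)
  rem : Fin m → ℝ → ℝ
  meas : ∀ i j, MeasurableSet {t : ℝ | eats i t = some j}
  rem_def : ∀ j, ∀ t : ℝ, 0 ≤ t →
    rem j t = 1 - ∑ i : Fin n,
      (volume {s : ℝ | 0 < s ∧ s ≤ t ∧ eats i s = some j}).toReal
  eats_iff : ∀ i, ∀ t : ℝ, 0 ≤ t → active i t → ∀ j,
    (eats i t = some j ↔ 0 < rem j t ∧ ∀ j', 0 < rem j' t → rk i j ≤ rk i j')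
  eats_none : ∀ i, ∀ t : ℝ, ¬ active i t → eats i t = none

namespace PSExec

variable {n m : ℕ} {rk : Fin n → Fin m → ℕ} {active : Fin n → ℝ → Prop}

/-- The total amount of item `j` eaten by agent `i` (the allocation `x i j`). -/
noncomputable def alloc (E : PSExec n m rk active) (i : Fin n) (j : Fin m) : ℝ :=
  (volume {s : ℝ | 0 < s ∧ E.eats i s = some j}).toReal

/-- The expected utility of agent `i` with cardinal utilities `a`. -/
noncomputable def utility (E : PSExec n m rk active) (a : Fin m → ℝ) (i : Fin n) : ℝ :=
  ∑ j, a j * E.alloc i j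

/-- Item `j` is exhausted exactly at time `τ`. -/
def exhaustedAt (E : PSExec n m rk active) (j : Fin m) (τ : ℝ) : Prop :=
  0 < τ ∧ E.rem j τ = 0 ∧ ∀ s : ℝ, 0 ≤ s → s < τ → 0 < E.rem j s

/-- Agent `i` is eating item `j` at the moment `τ`, in the left-limit sense (this is the
sense used for "eating an item at the moment of its exhaustion"). -/
def eatsAt (E : PSExec n m rk active) (i : Fin n) (j : Fin m) (τ : ℝ) : Prop :=
  ∃ δ > 0, ∀ s : ℝ, τ - δ < s → s < τ → E.eats i s = some j

/-- `T` is the exact moment at which the last item of `Obar` is exhausted. -/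
def exhaustTime (E : PSExec n m rk active) (Obar : Finset (Fin m)) (T : ℝ) : Prop :=
  (∀ j ∈ Obar, E.rem j T = 0) ∧ ∀ s : ℝ, 0 ≤ s → s < T → ∃ j ∈ Obar, 0 < E.rem j s

end PSExec

/-- Dichotomous cardinal utilities with interest set `Obar`. -/
def dicho {m : ℕ} (Obar : Finset (Fin m)) : Fin m → ℝ :=
  fun j => if j ∈ Obar then 1 else 0

/-!
The items `o_{k'}` and `j` (exhausted at `t₁ + t₂ < τ`) are distinct and together absorb `2`
units of eating time before `τ`. Agents 1 and 2 are the only ones that ever ate `o_{k'}` (an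
agent keeps eating an item until it is exhausted), and any agent eats at most `τ` units of the
two items together; every other agent contributes only to `j`, and only if it is still eating
`j` at `τ`. With at most one such agent the total is at most `3τ`, so `τ ≥ 2/3 > T`.
-/

namespace PSExec

variable {n m : ℕ} {rk : Fin n → Fin m → ℕ} {active : Fin n → ℝ → Prop}

def eatingTimes (E : PSExec n m rk active) (i : Fin n) (j : Fin m) (t : ℝ) : Set ℝ :=
  {s : ℝ | 0 < s ∧ s ≤ t ∧ E.eats i s = some j}

noncomputable def eatenBy (E : PSExec n m rk active) (i : Fin n) (j : Fin m) (t : ℝ) : ℝ :=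
  (volume (E.eatingTimes i j t)).toReal

section

variable (E : PSExec n m rk active)

lemma eatingTimes_eq_Ioc_inter (i : Fin n) (j : Fin m) (t : ℝ) :
    E.eatingTimes i j t = Set.Ioc 0 t ∩ {s | E.eats i s = some j} := by
  ext s
  simp [eatingTimes, and_assoc]

lemma volume_eatingTimes_le (i : Fin n) (j : Fin m) (t : ℝ) :
    volume (E.eatingTimes i j t) ≤ ENNReal.ofReal t := by
  rw [eatingTimes_eq_Ioc_inter, ← sub_zero t, ← Real.volume_Ioc, sub_zero]
  exact measure_mono Set.inter_subset_left

lemma volume_eatingTimes_ne_top (i : Fin n) (j : Fin m) (t : ℝ) :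
    volume (E.eatingTimes i j t) ≠ ⊤ :=
  ne_top_of_le_ne_top ENNReal.ofReal_ne_top (E.volume_eatingTimes_le i j t)

lemma eatenBy_le (i : Fin n) (j : Fin m) {t : ℝ} (ht : 0 ≤ t) : E.eatenBy i j t ≤ t :=
  calc E.eatenBy i j t ≤ (ENNReal.ofReal t).toReal :=
        ENNReal.toReal_mono ENNReal.ofReal_ne_top (E.volume_eatingTimes_le i j t)
    _ = t := ENNReal.toReal_ofReal ht

lemma eatenBy_mono (i : Fin n) (j : Fin m) {s t : ℝ} (hst : s ≤ t) :
    E.eatenBy i j s ≤ E.eatenBy i j t :=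
  ENNReal.toReal_mono (E.volume_eatingTimes_ne_top i j t)
    (measure_mono fun _ hu => ⟨hu.1, hu.2.1.trans hst, hu.2.2⟩)

lemma eatenBy_add_eatenBy_le (i : Fin n) {j j' : Fin m} (hjj' : j ≠ j') {t : ℝ} (ht : 0 ≤ t) :
    E.eatenBy i j t + E.eatenBy i j' t ≤ t := by
  have hdisj : Disjoint (E.eatingTimes i j t) (E.eatingTimes i j' t) :=
    Set.disjoint_left.2 fun s hj hj' =>
      hjj' (Option.some_injective _ (hj.2.2.symm.trans hj'.2.2))
  have hunion : E.eatingTimes i j t ∪ E.eatingTimes i j' t ⊆ Set.Ioc 0 t := by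
    rintro s (⟨h0, hs, -⟩ | ⟨h0, hs, -⟩) <;> exact ⟨h0, hs⟩
  have hle :
      volume (E.eatingTimes i j t) + volume (E.eatingTimes i j' t) ≤ ENNReal.ofReal t := by
    rw [← measure_union hdisj, ← sub_zero t, ← Real.volume_Ioc, sub_zero]
    · exact measure_mono hunion
    · rw [eatingTimes_eq_Ioc_inter]
      exact measurableSet_Ioc.inter (E.meas i j')
  have := ENNReal.toReal_mono ENNReal.ofReal_ne_top hle
  rwa [ENNReal.toReal_add (E.volume_eatingTimes_ne_top i j t)
    (E.volume_eatingTimes_ne_top i j' t), ENNReal.toReal_ofReal ht] at this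

lemma rem_eq_one_sub_sum_eatenBy (j : Fin m) {t : ℝ} (ht : 0 ≤ t) :
    E.rem j t = 1 - ∑ i, E.eatenBy i j t :=
  E.rem_def j t ht

lemma rem_antitone (j : Fin m) {s t : ℝ} (hs : 0 ≤ s) (hst : s ≤ t) :
    E.rem j t ≤ E.rem j s := by
  rw [E.rem_eq_one_sub_sum_eatenBy j hs, E.rem_eq_one_sub_sum_eatenBy j (hs.trans hst)]
  linarith [Finset.sum_le_sum fun i (_ : i ∈ Finset.univ) => E.eatenBy_mono i j hst]

lemma sum_eatenBy_eq_one {j : Fin m} {τ : ℝ} (hj : E.exhaustedAt j τ) :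
    ∑ i, E.eatenBy i j τ = 1 := by
  linarith [E.rem_eq_one_sub_sum_eatenBy j hj.1.le, hj.2.1]

lemma exhaustedAt_unique {j : Fin m} {σ τ : ℝ} (hσ : E.exhaustedAt j σ)
    (hτ : E.exhaustedAt j τ) : σ = τ := by
  by_contra hne
  rcases lt_or_gt_of_ne hne with hlt | hlt
  · exact (hτ.2.2 σ hσ.1.le hlt).ne' hσ.2.1
  · exact (hσ.2.2 τ hτ.1.le hlt).ne' hτ.2.1

end

section AllActive

variable (E : PSExec n m rk (fun _ _ => True))

lemma eats_of_eats_of_le {i : Fin n} {j : Fin m} {s u : ℝ} (hs : 0 ≤ s) (hsu : s ≤ u)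
    (h : E.eats i s = some j) (hrem : 0 < E.rem j u) : E.eats i u = some j := by
  have hbest := ((E.eats_iff i s hs trivial j).1 h).2
  exact (E.eats_iff i u (hs.trans hsu) trivial j).2
    ⟨hrem, fun j' hj' => hbest j' (hj'.trans_le (E.rem_antitone j' hs hsu))⟩

lemma eatsAt_of_eats {i : Fin n} {j : Fin m} {s τ : ℝ} (hs : 0 ≤ s) (hsτ : s < τ)
    (hj : E.exhaustedAt j τ) (h : E.eats i s = some j) : E.eatsAt i j τ :=
  ⟨τ - s, sub_pos.2 hsτ, fun u hsu huτ =>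
    E.eats_of_eats_of_le hs (by linarith) h (hj.2.2 u (by linarith) huτ)⟩

lemma eatenBy_eq_zero_of_not_eatsAt {i : Fin n} {j : Fin m} {τ : ℝ} (hj : E.exhaustedAt j τ)
    (h : ¬ E.eatsAt i j τ) : E.eatenBy i j τ = 0 := by
  suffices E.eatingTimes i j τ = ∅ by simp [eatenBy, this]
  refine Set.eq_empty_iff_forall_notMem.2 fun s ⟨hs, hsτ, hjs⟩ => ?_
  rcases hsτ.lt_or_eq with hsτ | rfl
  · exact h (E.eatsAt_of_eats hs.le hsτ hj hjs)
  · exact ((E.eats_iff i s hs.le trivial j).1 hjs).1.ne' hj.2.1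

theorem two_le_mul_of_eatsAt_subset {j j' : Fin m} (hjj' : j ≠ j') {σ τ : ℝ}
    (hστ : σ ≤ τ) (hj : E.exhaustedAt j τ) (hj' : E.exhaustedAt j' σ) (P : Finset (Fin n))
    (hP : ∀ i, E.eatsAt i j' σ → i ∈ P) :
    2 ≤ (P.card + {i | i ∉ P ∧ E.eatsAt i j τ}.ncard) * τ := by
  classical
  set f := fun i => E.eatenBy i j τ
  set g := fun i => E.eatenBy i j' σ
  set Q := Pᶜ.filter fun i => E.eatsAt i j τ
  have hQ : {i | i ∉ P ∧ E.eatsAt i j τ}.ncard = Q.card := by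
    rw [← Set.ncard_coe_finset]
    congr 1
    ext i
    simp [Q]
  have hg_P : ∑ i ∈ P, g i = 1 := by
    rw [← E.sum_eatenBy_eq_one hj']
    exact Finset.sum_subset (Finset.subset_univ P) fun i _ hi =>
      E.eatenBy_eq_zero_of_not_eatsAt hj' (mt (hP i) hi)
  have hf_Q : ∑ i ∈ Q, f i = ∑ i ∈ Pᶜ, f i :=
    Finset.sum_filter_of_ne fun i _ hi => by_contra fun h =>
      hi (E.eatenBy_eq_zero_of_not_eatsAt hj h)
  have hfg_P : ∑ i ∈ P, (f i + g i) ≤ P.card * τ := by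
    simpa using Finset.sum_le_card_nsmul P _ τ fun i _ =>
      (add_le_add_right (E.eatenBy_mono i j' hστ) _).trans
        (E.eatenBy_add_eatenBy_le i hjj' hj.1.le)
  have hf_Q_le : ∑ i ∈ Q, f i ≤ Q.card * τ := by
    simpa using Finset.sum_le_card_nsmul Q _ τ fun i _ => E.eatenBy_le i j hj.1.le
  have hf := E.sum_eatenBy_eq_one hj
  rw [← Finset.sum_add_sum_compl P] at hf
  rw [Finset.sum_add_distrib] at hfg_P
  rw [hQ]
  linarith

end AllActive

end PSExec

theorem o3_items_have_two_other_eaters_general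
    (n m : ℕ)
    (rk : Fin n → Fin m → ℕ)
    (i1 i2 : Fin n) (hi12 : i1 ≠ i2)
    (E : PSExec n m rk (fun _ _ => True))
    (T : ℝ) (hT2 : T < 2 / 3)
    (ok' : Fin m)
    (t1 t2 : ℝ)
    (hexh : E.exhaustedAt ok' (t1 + t2))
    (heaters : {i : Fin n | E.eatsAt i ok' (t1 + t2)} = {i1, i2}) :
    ∀ j : Fin m, ∀ τ : ℝ, t1 + t2 < τ → τ ≤ T → E.exhaustedAt j τ →
      2 ≤ Set.ncard {i : Fin n | i ≠ i1 ∧ i ≠ i2 ∧ E.eatsAt i j τ} := by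
  intro j τ hτ hτT hj
  have hne : j ≠ ok' := by
    rintro rfl
    exact hτ.ne (E.exhaustedAt_unique hexh hj)
  have hP : ∀ i, E.eatsAt i ok' (t1 + t2) → i ∈ ({i1, i2} : Finset (Fin n)) := fun i hi => by
    have : i ∈ ({i1, i2} : Set (Fin n)) := heaters ▸ hi
    simpa using this
  have key := E.two_le_mul_of_eatsAt_subset hne hτ.le hj hexh {i1, i2} hP
  have hothers : {i | i ∉ ({i1, i2} : Finset (Fin n)) ∧ E.eatsAt i j τ}
      = {i | i ≠ i1 ∧ i ≠ i2 ∧ E.eatsAt i j τ} := by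
    ext i
    simp [and_assoc]
  rw [Finset.card_pair hi12, hothers] at key
  by_contra! hfew
  have hfew' : ({i | i ≠ i1 ∧ i ≠ i2 ∧ E.eatsAt i j τ}.ncard : ℝ) ≤ 1 := by
    exact_mod_cast Nat.le_of_lt_succ hfew
  push_cast at key
  nlinarith [hj.1]

/-- in the truthful profile with `1/2 ≤ T < 2/3`, if item `o_{k'}` is eaten by
agent 1 during `(t₁, t₁+t₂]`, is exhausted at `t₁+t₂`, and at that moment only agents 1 and 2
are eating it, then every item exhausted in `(t₁+t₂, T]` has, at its exhaustion moment, at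
least two eating agents other than agents 1 and 2. -/
theorem o3_items_have_two_other_eaters
    (n m : ℕ) (hnm : m ≤ n)
    (rk : Fin n → Fin m → ℕ) (hrk : ∀ i, Function.Injective (rk i))
    (i1 i2 : Fin n) (hi12 : i1 ≠ i2)
    (Obar : Finset (Fin m))
    (htruth : ∀ j ∈ Obar, ∀ j' ∉ Obar, rk i1 j < rk i1 j')
    (E : PSExec n m rk (fun _ _ => True))
    (T : ℝ) (hT : E.exhaustTime Obar T) (hT1 : 1 / 2 ≤ T) (hT2 : T < 2 / 3)
    (ok' : Fin m) (hok' : ok' ∈ Obar)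
    (t1 t2 : ℝ) (ht1 : 0 ≤ t1) (ht2 : 0 < t2)
    (heat1 : ∀ s : ℝ, t1 < s → s < t1 + t2 → E.eats i1 s = some ok')
    (hexh : E.exhaustedAt ok' (t1 + t2))
    (heaters : {i : Fin n | E.eatsAt i ok' (t1 + t2)} = {i1, i2}) :
    ∀ j : Fin m, ∀ τ : ℝ, t1 + t2 < τ → τ ≤ T → E.exhaustedAt j τ →
      2 ≤ Set.ncard {i : Fin n | i ≠ i1 ∧ i ≠ i2 ∧ E.eatsAt i j τ} :=
  o3_items_have_two_other_eaters_general n m rk i1 i2 hi12 E T hT2 ok' t1 t2 hexh heaters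
end

section
/- Consider the Probabilistic Serial mechanism with any profile of reported strict orders, and let t_1 < 1/3 be a time such that every item of which agent 1 eats a positive amount and which is exhausted on or before time t_1 has, at its exhaustion moment, at least two agents other than agent 1 eating it. Then in the modified eating process in which agent 1 is removed entirely (it never eats, while all other agents follow the normal rules), every item that is exhausted on or before time t_1 in the original process is exhausted by time (3/2)·t_1. -/
open MeasureTheory

/-!
Without agent `i1` every item is exhausted no earlier than in the original process: at the
first moment this fails, the other agents have so far eaten the item in the reduced process
only when they ate it in the original one, because there they had at least as many items left
to choose from; continuity of the supplies then gives a contradiction.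

Let `O` be the set of items exhausted by `t₁`; its `#O` units are eaten during `(0, t₁]`, at
most `t₁` of them by `i1`. Whenever another agent eats from `O` before `t₁` in the original
process, it also eats from `O` in the reduced one: whatever it prefers there is either the same
item or an item that was already gone in the original process, hence in `O`. If an item `j ∈ O` survived
up to `T = 3t₁/2` in the reduced process, every agent that had eaten `j` would eat from `O`
throughout `(t₁, T]`. Each agent eats at most `t₁ < 1/3` of `j`, so at least two agents besides
`i1` ate `j`, and their extra `2(T - t₁) = t₁` units make up for `i1`'s share: all of `O`,
in particular `j`, would be gone by `T`.
-/

open MeasureTheory Set Filter Topology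
open scoped Finset

lemma Finset.sum_add_card_mul_le_sum {ι : Type*} {S P : Finset ι} {f g : ι → ℝ} {d : ℝ}
    (hPS : P ⊆ S) (hfg : ∀ i ∈ S, f i ≤ g i) (hP : ∀ i ∈ P, f i + d ≤ g i) :
    ∑ i ∈ S, f i + #P * d ≤ ∑ i ∈ S, g i := by
  have h : ∑ _i ∈ P, d ≤ ∑ i ∈ S, (g i - f i) :=
    calc ∑ _i ∈ P, d ≤ ∑ i ∈ P, (g i - f i) :=
          Finset.sum_le_sum fun i hi => le_sub_iff_add_le'.2 (hP i hi)
      _ ≤ ∑ i ∈ S, (g i - f i) :=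
          Finset.sum_le_sum_of_subset_of_nonneg hPS fun i hi _ => sub_nonneg.2 (hfg i hi)
  rw [Finset.sum_const, nsmul_eq_mul, Finset.sum_sub_distrib] at h
  linarith

lemma volume_ne_top_of_subset_Ioc {S : Set ℝ} {a b : ℝ} (h : S ⊆ Ioc a b) : volume S ≠ ⊤ :=
  ((measure_mono h).trans_lt measure_Ioc_lt_top).ne

namespace PSExec

variable {n m : ℕ} {rk : Fin n → Fin m → ℕ} {active active' : Fin n → ℝ → Prop}
  {i : Fin n} {j : Fin m} {s t τ t₁ T : ℝ}

section Supply

variable (E : PSExec n m rk active)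

def eatTimes (i : Fin n) (j : Fin m) (t : ℝ) : Set ℝ :=
  {s | 0 < s ∧ s ≤ t ∧ E.eats i s = some j}

noncomputable def eaten (i : Fin n) (j : Fin m) (t : ℝ) : ℝ :=
  volume.real (E.eatTimes i j t)

noncomputable def exhaustedBy (t : ℝ) : Finset (Fin m) :=
  Finset.univ.filter fun k => E.rem k t = 0

lemma mem_exhaustedBy {k : Fin m} : k ∈ E.exhaustedBy t ↔ E.rem k t = 0 := by
  simp [exhaustedBy]

lemma eatTimes_subset_Ioc : E.eatTimes i j t ⊆ Ioc 0 t := fun _ hs => ⟨hs.1, hs.2.1⟩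

lemma biUnion_eatTimes_subset_Ioc (O : Finset (Fin m)) :
    ⋃ k ∈ O, E.eatTimes i k t ⊆ Ioc 0 t :=
  iUnion₂_subset fun _ _ => E.eatTimes_subset_Ioc

lemma measurableSet_eatTimes : MeasurableSet (E.eatTimes i j t) := by
  have h : E.eatTimes i j t = Ioc 0 t ∩ {s | E.eats i s = some j} := by
    ext s; simp [eatTimes, and_assoc]
  exact h ▸ measurableSet_Ioc.inter (E.meas i j)

lemma eatTimes_mono (hst : s ≤ t) : E.eatTimes i j s ⊆ E.eatTimes i j t :=
  fun _ hu => ⟨hu.1, hu.2.1.trans hst, hu.2.2⟩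

lemma rem_eq (ht : 0 ≤ t) : E.rem j t = 1 - ∑ i, E.eaten i j t := E.rem_def j t ht

lemma rem_zero (j : Fin m) : E.rem j 0 = 1 := by
  have h : ∀ i, E.eatTimes i j 0 = ∅ := fun i =>
    eq_empty_of_subset_empty <| E.eatTimes_subset_Ioc.trans (Ioc_self 0).subset
  simp [E.rem_eq le_rfl, eaten, h]

lemma eaten_mono (hst : s ≤ t) : E.eaten i j s ≤ E.eaten i j t :=
  measureReal_mono (E.eatTimes_mono hst) (volume_ne_top_of_subset_Ioc E.eatTimes_subset_Ioc)

lemma eaten_le_eaten_add (hst : s ≤ t) : E.eaten i j t ≤ E.eaten i j s + (t - s) := by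
  have hsub : E.eatTimes i j t ⊆ E.eatTimes i j s ∪ Ioc s t := fun u ⟨hu, hut, he⟩ =>
    (le_or_gt u s).imp (fun hus => ⟨hu, hus, he⟩) fun hsu => ⟨hsu, hut⟩
  calc E.eaten i j t ≤ volume.real (E.eatTimes i j s ∪ Ioc s t) :=
        measureReal_mono hsub (measure_union_lt_top
          (volume_ne_top_of_subset_Ioc (E.eatTimes_subset_Ioc)).lt_top measure_Ioc_lt_top).ne
    _ ≤ E.eaten i j s + (t - s) := by
        rw [← Real.volume_real_Ioc_of_le hst]; exact measureReal_union_le _ _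

lemma sum_eaten_eq_measureReal (O : Finset (Fin m)) :
    ∑ k ∈ O, E.eaten i k t = volume.real (⋃ k ∈ O, E.eatTimes i k t) := by
  refine (measureReal_biUnion_finset (fun k _ k' _ hkk' => ?_)
    (fun _ _ => E.measurableSet_eatTimes)
    fun _ _ => volume_ne_top_of_subset_Ioc E.eatTimes_subset_Ioc).symm
  exact disjoint_left.2 fun s hs hs' => hkk' (Option.some.inj (hs.2.2.symm.trans hs'.2.2))

lemma sum_eaten_le (O : Finset (Fin m)) (ht : 0 ≤ t) : ∑ k ∈ O, E.eaten i k t ≤ t := by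
  rw [sum_eaten_eq_measureReal]
  calc _ ≤ volume.real (Ioc 0 t) :=
        measureReal_mono (E.biUnion_eatTimes_subset_Ioc O) measure_Ioc_lt_top.ne
    _ = t := by rw [Real.volume_real_Ioc_of_le ht, sub_zero]

lemma eaten_le (ht : 0 ≤ t) : E.eaten i j t ≤ t := by
  simpa using E.sum_eaten_le (i := i) {j} ht

lemma sum_rem_eq (O : Finset (Fin m)) (ht : 0 ≤ t) :
    ∑ k ∈ O, E.rem k t = #O - ∑ i, ∑ k ∈ O, E.eaten i k t := by
  rw [Finset.sum_congr rfl fun k _ => E.rem_eq ht, Finset.sum_sub_distrib, Finset.sum_const,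
    nsmul_one, Finset.sum_comm]

lemma eaten_eq_zero_of_forall_not_active (h : ∀ s, ¬ active i s) : E.eaten i j t = 0 := by
  have : E.eatTimes i j t = ∅ :=
    eq_empty_of_forall_notMem fun s hs => by simpa [E.eats_none i s (h s)] using hs.2.2
  simp [eaten, this]

lemma exists_eats_of_eaten_pos (h : 0 < E.eaten i j t) :
    ∃ s, 0 < s ∧ s ≤ t ∧ E.eats i s = some j :=
  nonempty_of_measureReal_ne_zero h.ne'

lemma one_le_card_mul_of_rem_eq_zero (hτ : 0 ≤ τ) (h : E.rem j τ = 0) :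
    1 ≤ #(Finset.univ.filter fun i => 0 < E.eaten i j τ) * τ := by
  calc (1 : ℝ) = ∑ i, E.eaten i j τ := by linarith [E.rem_eq (j := j) hτ]
    _ = ∑ i ∈ Finset.univ.filter (fun i => 0 < E.eaten i j τ), E.eaten i j τ :=
        (Finset.sum_filter_of_ne fun i _ h => measureReal_nonneg.lt_of_ne' h).symm
    _ ≤ _ := by
        simpa using Finset.sum_le_card_nsmul (Finset.univ.filter fun i => 0 < E.eaten i j τ)
          (fun i => E.eaten i j τ) τ fun i _ => E.eaten_le hτ

lemma antitoneOn_rem (j : Fin m) : AntitoneOn (E.rem j) (Ici 0) := fun s hs t ht hst => by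
  rw [E.rem_eq hs, E.rem_eq ht]
  exact sub_le_sub_left (Finset.sum_le_sum fun i _ => E.eaten_mono hst) 1

lemma rem_le_rem_add (hs : 0 ≤ s) (hst : s ≤ t) : E.rem j s ≤ E.rem j t + n * (t - s) := by
  have h : ∑ i, E.eaten i j t ≤ ∑ i, (E.eaten i j s + (t - s)) :=
    Finset.sum_le_sum fun i _ => E.eaten_le_eaten_add hst
  rw [Finset.sum_add_distrib, Finset.sum_const, Finset.card_univ, Fintype.card_fin,
    nsmul_eq_mul] at h
  rw [E.rem_eq hs, E.rem_eq (hs.trans hst)]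
  linarith

lemma lipschitzOnWith_rem (j : Fin m) : LipschitzOnWith n (E.rem j) (Ici 0) :=
  LipschitzOnWith.of_le_add_mul _ fun s hs t ht => by
    rcases le_total s t with hst | hts
    · simpa [Real.dist_eq, abs_of_nonpos (sub_nonpos.2 hst)]
        using E.rem_le_rem_add (j := j) hs hst
    · exact (E.antitoneOn_rem j ht hs hts).trans
        (le_add_of_nonneg_right (mul_nonneg (NNReal.coe_nonneg _) dist_nonneg))

lemma continuousOn_rem (j : Fin m) : ContinuousOn (E.rem j) (Ici 0) :=
  (E.lipschitzOnWith_rem j).continuousOn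

lemma active_of_eats (h : E.eats i s = some j) : active i s := by
  by_contra hact
  simp [E.eats_none i s hact] at h

lemma rem_pos_of_eats (hs : 0 ≤ s) (h : E.eats i s = some j) : 0 < E.rem j s :=
  ((E.eats_iff i s hs (E.active_of_eats h) j).1 h).1

lemma exists_eats_le (ht : 0 ≤ t) (hact : active i t) (hj : 0 < E.rem j t) :
    ∃ k, E.eats i t = some k ∧ rk i k ≤ rk i j := by
  obtain ⟨k, hk, hmin⟩ := Finset.exists_min_image (Finset.univ.filter fun k => 0 < E.rem k t)
    (rk i) ⟨j, by simpa using hj⟩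
  simp only [Finset.mem_filter, Finset.mem_univ, true_and] at hk hmin
  exact ⟨k, (E.eats_iff i t ht hact k).2 ⟨hk, hmin⟩, hmin j hj⟩

lemma rem_eq_of_rem_nonpos (hτ : 0 ≤ τ) (hτt : τ ≤ t) (h : E.rem j τ ≤ 0) :
    E.rem j t = E.rem j τ := by
  have hsame : ∀ i, E.eatTimes i j t = E.eatTimes i j τ := fun i => by
    refine Subset.antisymm (fun s ⟨hs, hst, he⟩ => ⟨hs, not_lt.1 fun hτs => ?_, he⟩)
      (E.eatTimes_mono hτt)
    linarith [E.rem_pos_of_eats hs.le he, E.antitoneOn_rem j hτ (hτ.trans hτs.le) hτs.le]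
  simp only [E.rem_eq hτ, E.rem_eq (hτ.trans hτt), eaten, hsame]

lemma rem_nonneg (j : Fin m) (ht : 0 ≤ t) : 0 ≤ E.rem j t := by
  by_contra! hneg
  obtain ⟨τ, hτ, hτ0⟩ : ∃ τ ∈ Icc 0 t, E.rem j τ = 0 :=
    intermediate_value_Icc' ht ((E.continuousOn_rem j).mono Icc_subset_Ici_self)
      ⟨hneg.le, by rw [E.rem_zero]; norm_num⟩
  linarith [E.rem_eq_of_rem_nonpos hτ.1 hτ.2 hτ0.le]

lemma exists_exhaustedAt_of_rem_eq_zero (ht : 0 ≤ t) (h : E.rem j t = 0) :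
    ∃ τ, τ ≤ t ∧ E.exhaustedAt j τ := by
  have hZ : IsCompact (Icc 0 t ∩ E.rem j ⁻¹' {0}) :=
    isCompact_Icc.of_isClosed_subset (((E.continuousOn_rem j).mono
      Icc_subset_Ici_self).preimage_isClosed_of_isClosed isClosed_Icc isClosed_singleton)
      inter_subset_left
  obtain ⟨τ, ⟨⟨hτ0, hτt⟩, hτ⟩, hleast⟩ := hZ.exists_isLeast ⟨t, ⟨⟨ht, le_rfl⟩, h⟩⟩
  refine ⟨τ, hτt, hτ0.lt_of_ne ?_, hτ,
    fun s hs hsτ => (E.rem_nonneg j hs).lt_of_ne fun hs0 => ?_⟩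
  · rintro rfl
    simp [E.rem_zero] at hτ
  · exact (hleast ⟨⟨hs, hsτ.le.trans hτt⟩, hs0.symm⟩).not_gt hsτ

end Supply

section Comparison

variable {E : PSExec n m rk active} {E' : PSExec n m rk active'}

lemma rem_le_rem_of_forall_lt (hact : ∀ i t, active' i t → active i t) (hτ : 0 ≤ τ)
    (hbefore : ∀ s, 0 ≤ s → s < τ → ∀ k, 0 < E.rem k s → 0 < E'.rem k s)
    (hj : 0 < E.rem j τ) : E.rem j τ ≤ E'.rem j τ := by
  rw [E.rem_eq hτ, E'.rem_eq hτ]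
  suffices h : ∀ i, E'.eaten i j τ ≤ E.eaten i j τ by
    linarith [Finset.sum_le_sum fun i (_ : i ∈ (Finset.univ : Finset (Fin n))) => h i]
  intro i
  -- before `τ` every item left in `E` is left in `E'`, so a favourite in `E'` is one in `E`
  have hsub : E'.eatTimes i j τ \ {τ} ⊆ E.eatTimes i j τ := by
    rintro s ⟨⟨hs, hsτ, he⟩, hne⟩
    have hsτ : s < τ := lt_of_le_of_ne hsτ hne
    have htop := ((E'.eats_iff i s hs.le (E'.active_of_eats he) j).1 he).2
    refine ⟨hs, hsτ.le, (E.eats_iff i s hs.le (hact i s (E'.active_of_eats he)) j).2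
      ⟨hj.trans_le (E.antitoneOn_rem j hs.le hτ hsτ.le), fun k hk => htop k ?_⟩⟩
    exact hbefore s hs.le hsτ k hk
  calc E'.eaten i j τ = volume.real (E'.eatTimes i j τ \ {τ}) :=
        (measureReal_sdiff_null (by simp [measureReal_def]) (by simp)).symm
    _ ≤ E.eaten i j τ :=
        measureReal_mono hsub (volume_ne_top_of_subset_Ioc E.eatTimes_subset_Ioc)

theorem rem_pos_of_rem_pos (hact : ∀ i t, active' i t → active i t) (ht : 0 ≤ t)
    (hj : 0 < E.rem j t) : 0 < E'.rem j t := by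
  by_contra hj'
  set bad := {s | 0 ≤ s ∧ ∃ k, 0 < E.rem k s ∧ E'.rem k s ≤ 0}
  have hne : bad.Nonempty := ⟨t, ht, j, hj, not_lt.1 hj'⟩
  have hglb : IsGLB bad (sInf bad) := isGLB_csInf hne ⟨0, fun s hs => hs.1⟩
  set τ := sInf bad
  have hτ : 0 ≤ τ := hglb.2 fun s hs => hs.1
  have hbefore : ∀ s, 0 ≤ s → s < τ → ∀ k, 0 < E.rem k s → 0 < E'.rem k s :=
    fun s hs hsτ k hk => not_le.1 fun hk' => (hglb.1 ⟨hs, k, hk, hk'⟩).not_gt hsτ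
  have hafter : ∀ᶠ s in 𝓝[≥] τ, τ ≤ s ∧ ∀ k, 0 < E.rem k τ → 0 < E'.rem k s := by
    refine eventually_mem_nhdsWithin.and (eventually_all.2 fun k => ?_)
    by_cases hk : 0 < E.rem k τ
    · have hk' := hk.trans_le (rem_le_rem_of_forall_lt hact hτ hbefore hk)
      have hcont : ContinuousWithinAt (E'.rem k) (Ici τ) τ :=
        (E'.continuousOn_rem k τ hτ).mono (Ici_subset_Ici.2 hτ)
      exact (hcont.eventually_const_lt hk').mono fun _ h _ => h
    · exact .of_forall fun _ h => absurd h hk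
  obtain ⟨s, ⟨-, k, hk, hk'⟩, hτs, hgood⟩ :=
    ((hglb.frequently_mem hne).and_eventually hafter).exists
  exact hk'.not_gt (hgood k (hk.trans_le (E.antitoneOn_rem k hτ (hτ.trans hτs) hτs)))

lemma exists_eats_mem_exhaustedBy (hrk : Function.Injective (rk i)) (hs : 0 ≤ s)
    (hst₁ : s ≤ t₁) (hst : s ≤ t) (hact' : active' i t) (he : E.eats i s = some j)
    (hj : E.rem j t₁ = 0) (hj' : 0 < E'.rem j t) :
    ∃ k ∈ E.exhaustedBy t₁, E'.eats i t = some k := by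
  obtain ⟨k, hk, hkj⟩ := E'.exists_eats_le (hs.trans hst) hact' hj'
  refine ⟨k, E.mem_exhaustedBy.2 ?_, hk⟩
  by_cases hks : 0 < E.rem k s
  · have hjk := ((E.eats_iff i s hs (E.active_of_eats he) j).1 he).2 k hks
    rwa [hrk (le_antisymm hkj hjk)]
  · have h := E.rem_eq_of_rem_nonpos hs hst₁ (not_lt.1 hks)
    linarith [E.rem_nonneg k (hs.trans hst₁)]

lemma biUnion_eatTimes_subset (hact : ∀ i t, active' i t → active i t)
    (hrk : Function.Injective (rk i)) (hi : ∀ t, active' i t) (hT : t₁ ≤ T) :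
    ⋃ k ∈ E.exhaustedBy t₁, E.eatTimes i k t₁
      ⊆ ⋃ k ∈ E.exhaustedBy t₁, E'.eatTimes i k T := by
  intro s hs
  obtain ⟨k, hk, hs, hst₁, he⟩ := mem_iUnion₂.1 hs
  obtain ⟨k', hk', he'⟩ := exists_eats_mem_exhaustedBy hrk hs.le hst₁ le_rfl (hi s) he
    (E.mem_exhaustedBy.1 hk) (rem_pos_of_rem_pos hact hs.le (E.rem_pos_of_eats hs.le he))
  exact mem_iUnion₂.2 ⟨k', hk', hs, hst₁.trans hT, he'⟩

lemma Ioc_subset_biUnion_eatTimes (hrk : Function.Injective (rk i)) (hi : ∀ t, active' i t)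
    (hs : 0 < s) (hst₁ : s ≤ t₁) (he : E.eats i s = some j) (hj : E.rem j t₁ = 0)
    (hj' : 0 < E'.rem j T) : Ioc t₁ T ⊆ ⋃ k ∈ E.exhaustedBy t₁, E'.eatTimes i k T := by
  rintro t ⟨ht₁t, htT⟩
  have ht : 0 < t := hs.trans_le (hst₁.trans ht₁t.le)
  obtain ⟨k, hk, he'⟩ := exists_eats_mem_exhaustedBy hrk hs.le hst₁ (hst₁.trans ht₁t.le)
    (hi t) he hj (hj'.trans_le (E'.antitoneOn_rem j ht.le (ht.le.trans htT) htT))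
  exact mem_iUnion₂.2 ⟨k, hk, ht, htT, he'⟩

lemma sum_eaten_exhaustedBy_le (hact : ∀ i t, active' i t → active i t)
    (hrk : Function.Injective (rk i)) (hi : ∀ t, active' i t) (hT : t₁ ≤ T) :
    ∑ k ∈ E.exhaustedBy t₁, E.eaten i k t₁ ≤ ∑ k ∈ E.exhaustedBy t₁, E'.eaten i k T := by
  rw [sum_eaten_eq_measureReal, sum_eaten_eq_measureReal]
  exact measureReal_mono (biUnion_eatTimes_subset hact hrk hi hT)
    (volume_ne_top_of_subset_Ioc (E'.biUnion_eatTimes_subset_Ioc _))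

lemma sum_eaten_exhaustedBy_add_le (hact : ∀ i t, active' i t → active i t)
    (hrk : Function.Injective (rk i)) (hi : ∀ t, active' i t) (hT : t₁ ≤ T)
    (hs : 0 < s) (hst₁ : s ≤ t₁) (he : E.eats i s = some j) (hj : E.rem j t₁ = 0)
    (hj' : 0 < E'.rem j T) :
    ∑ k ∈ E.exhaustedBy t₁, E.eaten i k t₁ + (T - t₁)
      ≤ ∑ k ∈ E.exhaustedBy t₁, E'.eaten i k T := by
  have hdisj : Disjoint (⋃ k ∈ E.exhaustedBy t₁, E.eatTimes i k t₁) (Ioc t₁ T) :=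
    (Ioc_disjoint_Ioc_of_le le_rfl).mono_left (E.biUnion_eatTimes_subset_Ioc _)
  rw [sum_eaten_eq_measureReal, sum_eaten_eq_measureReal, ← Real.volume_real_Ioc_of_le hT,
    ← measureReal_union hdisj measurableSet_Ioc
      (volume_ne_top_of_subset_Ioc (E.biUnion_eatTimes_subset_Ioc _)) measure_Ioc_lt_top.ne]
  exact measureReal_mono (union_subset (biUnion_eatTimes_subset hact hrk hi hT)
    (Ioc_subset_biUnion_eatTimes hrk hi hs hst₁ he hj hj'))
    (volume_ne_top_of_subset_Ioc (E'.biUnion_eatTimes_subset_Ioc _))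

end Comparison

theorem sum_rem_exhaustedBy_le_of_removed {i₁ : Fin n}
    (hrk : ∀ i, Function.Injective (rk i))
    (E : PSExec n m rk fun _ _ => True) (E' : PSExec n m rk fun i _ => i ≠ i₁)
    (ht₁ : 0 ≤ t₁) (hT : t₁ ≤ T) (hj : E.rem j t₁ = 0) (hj' : 0 < E'.rem j T)
    {P : Finset (Fin n)} (hP : P ⊆ Finset.univ.erase i₁)
    (hPj : ∀ i ∈ P, ∃ s, 0 < s ∧ s ≤ t₁ ∧ E.eats i s = some j) :
    ∑ k ∈ E.exhaustedBy t₁, E'.rem k T ≤ t₁ - #P * (T - t₁) := by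
  set O := E.exhaustedBy t₁
  have hact : ∀ (i : Fin n) (t : ℝ), i ≠ i₁ → True := fun _ _ _ => trivial
  have hgain := Finset.sum_add_card_mul_le_sum (d := T - t₁) hP
    (fun i hi => sum_eaten_exhaustedBy_le hact (hrk i) (fun _ => Finset.ne_of_mem_erase hi)
      hT)
    fun i hi => by
      obtain ⟨s, hs, hst₁, he⟩ := hPj i hi
      exact sum_eaten_exhaustedBy_add_le hact (hrk i) (fun _ => Finset.ne_of_mem_erase (hP hi))
        hT hs hst₁ he hj hj'
  have hE : ∑ i, ∑ k ∈ O, E.eaten i k t₁ = #O := by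
    have h := E.sum_rem_eq O ht₁
    rw [Finset.sum_eq_zero fun k hk => E.mem_exhaustedBy.1 hk] at h
    linarith
  rw [← Finset.add_sum_erase _ _ (Finset.mem_univ i₁)] at hE
  rw [E'.sum_rem_eq O (ht₁.trans hT), ← Finset.add_sum_erase _ _ (Finset.mem_univ i₁),
    Finset.sum_eq_zero fun k _ => E'.eaten_eq_zero_of_forall_not_active fun _ h => h rfl]
  linarith [E.sum_eaten_le O (i := i₁) ht₁]

end PSExec

theorem removed_agent_exhaust_O1_general
    (n m : ℕ) (rk : Fin n → Fin m → ℕ) (hrk : ∀ i, Function.Injective (rk i))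
    (i1 : Fin n)
    (E : PSExec n m rk (fun _ _ => True))
    (E' : PSExec n m rk (fun i _ => i ≠ i1))
    (t1 : ℝ) (ht1' : t1 < 1 / 3) :
    ∀ j : Fin m, ∀ τ : ℝ, τ ≤ t1 → E.exhaustedAt j τ →
      ∃ τ' : ℝ, τ' ≤ (3 / 2) * t1 ∧ E'.exhaustedAt j τ' := by
  rintro j τ hτt1 ⟨hτ, hjτ, -⟩
  have ht1 : 0 ≤ t1 := hτ.le.trans hτt1
  have hj : E.rem j t1 = 0 := (E.rem_eq_of_rem_nonpos hτ.le hτt1 hjτ.le).trans hjτ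
  suffices hj' : E'.rem j (3 / 2 * t1) = 0 from
    E'.exists_exhaustedAt_of_rem_eq_zero (by linarith) hj'
  by_contra hj'
  replace hj' := (E'.rem_nonneg j (by linarith)).lt_of_ne' hj'
  set eaters := Finset.univ.filter fun i => 0 < E.eaten i j τ
  -- each agent eats at most `τ < 1/3` of `j`, so more than three agents ate some of it
  have heaters : 3 < #eaters := by
    have := E.one_le_card_mul_of_rem_eq_zero hτ.le hjτ
    exact_mod_cast (show (3 : ℝ) < #eaters by nlinarith)
  have hP : (2 : ℝ) ≤ #(eaters.erase i1) := by
    have := Finset.pred_card_le_card_erase (s := eaters) (a := i1)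
    exact_mod_cast (by omega : 2 ≤ #(eaters.erase i1))
  have hO := E.sum_rem_exhaustedBy_le_of_removed hrk E' ht1 (by linarith) hj hj'
    (P := eaters.erase i1) (Finset.erase_subset_erase _ (Finset.subset_univ _)) fun i hi =>
      have ⟨s, hs, hsτ, he⟩ :=
        E.exists_eats_of_eaten_pos (Finset.mem_filter.1 (Finset.mem_of_mem_erase hi)).2
      ⟨s, hs, hsτ.trans hτt1, he⟩
  have hjO : E'.rem j (3 / 2 * t1) ≤ ∑ k ∈ E.exhaustedBy t1, E'.rem k (3 / 2 * t1) :=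
    Finset.single_le_sum (fun k _ => E'.rem_nonneg k (by linarith)) (E.mem_exhaustedBy.2 hj)
  nlinarith

/-- let `t₁ < 1/3` be a time such that every item of which agent 1 eats a
positive amount and which is exhausted on or before `t₁` has, at its exhaustion moment, at
least two agents other than agent 1 eating it.  Then, with agent 1 removed entirely, every
item exhausted on or before `t₁` in the original process is exhausted by time `(3/2)·t₁`. -/
theorem removed_agent_exhaust_O1
    (n m : ℕ) (rk : Fin n → Fin m → ℕ) (hrk : ∀ i, Function.Injective (rk i))
    (i1 : Fin n)
    (E : PSExec n m rk (fun _ _ => True))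
    (E' : PSExec n m rk (fun i _ => i ≠ i1))
    (t1 : ℝ) (ht1 : 0 ≤ t1) (ht1' : t1 < 1 / 3)
    (h2eaters : ∀ j : Fin m, 0 < E.alloc i1 j → ∀ τ : ℝ, τ ≤ t1 → E.exhaustedAt j τ →
      2 ≤ Set.ncard {i : Fin n | i ≠ i1 ∧ E.eatsAt i j τ}) :
    ∀ j : Fin m, ∀ τ : ℝ, τ ≤ t1 → E.exhaustedAt j τ →
      ∃ τ' : ℝ, τ' ≤ (3 / 2) * t1 ∧ E'.exhaustedAt j τ' :=
  removed_agent_exhaust_O1_general n m rk hrk i1 E E' t1 ht1'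
end
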